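/- arXiv:1503.06243 — 2 statements merged into one kernel-verified Lean document; each statement's English description precedes it below -/
import Mathlib

section
/- For n ≥ 4 and 0 ≤ d ≤ n-3, the number of standard Young tableaux of shape (d+1, d+1, 1^(n-d-3)) equals (1/(n+d)) · C(n+d, d+1) · C(n-3, d). -/
/-- `c = (i, j)` is a cell of the Young diagram with row lengths `shape`
(row `i`, column `j`, both `0`-indexed). -/
def IsCell (shape : List ℕ) (c : ℕ × ℕ) : Prop := c.2 < shape.getD c.1 0

/-- `T` is a standard Young tableau of shape `shape`: it vanishes off the diagram,
its entries on the diagram are a filling by the distinct values `1, …, N`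
(`N` the number of boxes), and entries increase along rows and down columns. -/
def IsSYT (shape : List ℕ) (T : ℕ × ℕ → ℕ) : Prop :=
  (∀ c, ¬ IsCell shape c → T c = 0) ∧
  (∀ c, IsCell shape c → 1 ≤ T c ∧ T c ≤ shape.sum) ∧
  (∀ c c', IsCell shape c → IsCell shape c' → T c = T c' → c = c') ∧
  (∀ i j, IsCell shape (i, j + 1) → T (i, j) < T (i, j + 1)) ∧
  (∀ i j, IsCell shape (i + 1, j) → T (i, j) < T (i + 1, j))

/-- The number of standard Young tableaux of shape `shape`. -/
noncomputable def sytCount (shape : List ℕ) : ℕ :=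
  Nat.card {T : ℕ × ℕ → ℕ // IsSYT shape T}

namespace SYTAux

lemma getD_le_sum (s : List ℕ) (i : ℕ) : s.getD i 0 ≤ s.sum := by
  induction s generalizing i with
  | nil => simp [List.getD]
  | cons x t ih =>
    cases i with
    | zero => simp [List.getD]
    | succ n =>
      have := ih n
      simp only [List.getD_cons_succ, List.sum_cons]
      omega

lemma cell_lt (s : List ℕ) (c : ℕ × ℕ) (h : IsCell s c) :
    c.1 < s.length ∧ c.2 < s.sum := by
  unfold IsCell at h
  constructor
  · by_contra hl
    rw [List.getD_eq_default _ _ (by omega)] at h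
    omega
  · exact lt_of_lt_of_le h (getD_le_sum s c.1)

def cellFinset (s : List ℕ) : Finset (ℕ × ℕ) :=
  (Finset.range s.length).biUnion fun i => {i} ×ˢ Finset.range (s.getD i 0)

lemma mem_cellFinset {s : List ℕ} {c : ℕ × ℕ} : c ∈ cellFinset s ↔ IsCell s c := by
  simp only [cellFinset, Finset.mem_biUnion, Finset.mem_range, Finset.mem_product,
    Finset.mem_singleton]
  constructor
  · rintro ⟨i, hi, rfl, hc⟩; exact hc
  · intro h
    exact ⟨c.1, (cell_lt s c h).1, rfl, h⟩

lemma sum_getD (s : List ℕ) : ∑ i ∈ Finset.range s.length, s.getD i 0 = s.sum := by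
  induction s with
  | nil => simp
  | cons x t ih =>
    rw [List.length_cons, Finset.sum_range_succ', List.sum_cons]
    simp only [List.getD_cons_succ, List.getD_cons_zero]
    rw [ih]; omega

lemma card_cellFinset (s : List ℕ) : (cellFinset s).card = s.sum := by
  rw [cellFinset, Finset.card_biUnion]
  · simp only [Finset.card_product, Finset.card_singleton, Finset.card_range, one_mul]
    exact sum_getD s
  · intro i _ j _ hij
    simp only [Finset.disjoint_left, Finset.mem_product, Finset.mem_singleton]
    rintro ⟨a, b⟩ ⟨rfl, _⟩ ⟨h2, _⟩
    exact hij h2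

lemma exists_cell {s : List ℕ} {T : ℕ × ℕ → ℕ} (h : IsSYT s T) {v : ℕ}
    (h1 : 1 ≤ v) (h2 : v ≤ s.sum) : ∃ c, IsCell s c ∧ T c = v := by
  obtain ⟨h0, hb, hinj, _, _⟩ := h
  have := Finset.surj_on_of_inj_on_of_card_le (s := cellFinset s)
    (t := Finset.Icc 1 s.sum) (fun c _ => T c)
    (fun a ha => by
      have := hb a (mem_cellFinset.mp ha)
      simp [Finset.mem_Icc]; omega)
    (fun a1 a2 ha1 ha2 he => hinj a1 a2 (mem_cellFinset.mp ha1) (mem_cellFinset.mp ha2) he)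
    (by rw [card_cellFinset, Nat.card_Icc]; omega)
    v (by simp [Finset.mem_Icc]; omega)
  obtain ⟨a, ha, hav⟩ := this
  exact ⟨a, mem_cellFinset.mp ha, hav.symm⟩

lemma max_corner {s : List ℕ} {T : ℕ × ℕ → ℕ} (h : IsSYT s T) (hpos : 1 ≤ s.sum) :
    ∃ c, IsCell s c ∧ T c = s.sum ∧ ¬ IsCell s (c.1, c.2 + 1) ∧ ¬ IsCell s (c.1 + 1, c.2) := by
  obtain ⟨c, hc, hv⟩ := exists_cell h hpos le_rfl
  obtain ⟨i, j⟩ := c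
  refine ⟨(i, j), hc, hv, ?_, ?_⟩
  · show ¬ IsCell s (i, j + 1)
    intro hcell
    have := h.2.2.2.1 i j hcell
    have := (h.2.1 _ hcell).2
    omega
  · show ¬ IsCell s (i + 1, j)
    intro hcell
    have := h.2.2.2.2 i j hcell
    have := (h.2.1 _ hcell).2
    omega

instance sytFinite (s : List ℕ) : Finite {T : ℕ × ℕ → ℕ // IsSYT s T} := by
  apply Finite.of_injective
    (f := fun T (c : cellFinset s) => (⟨T.1 c, by
      have := T.2.2.1 c (mem_cellFinset.mp c.2)
      omega⟩ : Fin (s.sum + 1)))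
  intro T T' he
  ext c
  by_cases hc : IsCell s c
  · have := congrFun he ⟨c, mem_cellFinset.mpr hc⟩
    simpa using this
  · rw [T.2.1 c hc, T'.2.1 c hc]

lemma setFinite (s : List ℕ) : {T : ℕ × ℕ → ℕ | IsSYT s T}.Finite :=
  Set.finite_coe_iff.mp (sytFinite s)

lemma sytCount_eq_ncard (s : List ℕ) : sytCount s = {T : ℕ × ℕ → ℕ | IsSYT s T}.ncard :=
  Nat.card_coe_set_eq _




lemma ncard_remove (s s' : List ℕ) (c : ℕ × ℕ)
    (hcell : ∀ x, IsCell s' x ↔ IsCell s x ∧ x ≠ c)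
    (hc : IsCell s c)
    (hr : ¬ IsCell s (c.1, c.2 + 1)) (hbl : ¬ IsCell s (c.1 + 1, c.2))
    (hsum : s.sum = s'.sum + 1) :
    {T : ℕ × ℕ → ℕ | IsSYT s T ∧ T c = s.sum}.ncard = sytCount s' := by
  have hcc : ¬ IsCell s' c := by rw [hcell]; simp
  rw [sytCount, ← Nat.card_coe_set_eq]
  apply Nat.card_congr
  refine
    { toFun := fun T => ⟨Function.update T.1 c 0, ?_⟩
      invFun := fun T => ⟨Function.update T.1 c s.sum, ?_, ?_⟩
      left_inv := ?_
      right_inv := ?_ }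
  · -- forward: IsSYT s' (update T c 0)
    obtain ⟨T, hT, hTc⟩ := T
    obtain ⟨h0, hb, hinj, hrow, hcol⟩ := hT
    dsimp only
    refine ⟨?_, ?_, ?_, ?_, ?_⟩
    · intro x hx
      by_cases hxc : x = c
      · subst hxc; simp
      · rw [Function.update_of_ne hxc]
        exact h0 x (fun hxs => hx ((hcell x).mpr ⟨hxs, hxc⟩))
    · intro x hx
      rw [hcell] at hx
      obtain ⟨hxs, hxc⟩ := hx
      rw [Function.update_of_ne hxc]
      have := hb x hxs
      have hne : T x ≠ s.sum := fun he => hxc (hinj x c hxs hc (he.trans hTc.symm))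
      omega
    · intro x y hx hy he
      rw [hcell] at hx hy
      rw [Function.update_of_ne hx.2, Function.update_of_ne hy.2] at he
      exact hinj x y hx.1 hy.1 he
    · intro i j hx
      rw [hcell] at hx
      have h1 : (i, j) ≠ c := by
        rintro rfl; exact hr hx.1
      rw [Function.update_of_ne h1, Function.update_of_ne hx.2]
      exact hrow i j hx.1
    · intro i j hx
      rw [hcell] at hx
      have h1 : (i, j) ≠ c := by
        rintro rfl; exact hbl hx.1
      rw [Function.update_of_ne h1, Function.update_of_ne hx.2]
      exact hcol i j hx.1
  · -- backward: IsSYT s (update T c N)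
    obtain ⟨T, h0, hb, hinj, hrow, hcol⟩ := T
    dsimp only
    refine ⟨?_, ?_, ?_, ?_, ?_⟩
    · intro x hx
      have hxc : x ≠ c := fun he => hx (he ▸ hc)
      rw [Function.update_of_ne hxc]
      exact h0 x (fun hxs => hx ((hcell x).mp hxs).1)
    · intro x hx
      by_cases hxc : x = c
      · subst hxc; simp; omega
      · rw [Function.update_of_ne hxc]
        have := hb x ((hcell x).mpr ⟨hx, hxc⟩)
        omega
    · intro x y hx hy he
      by_cases hxc : x = c <;> by_cases hyc : y = c
      · rw [hxc, hyc]
      · subst hxc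
        rw [Function.update_self, Function.update_of_ne hyc] at he
        have := hb y ((hcell y).mpr ⟨hy, hyc⟩)
        omega
      · subst hyc
        rw [Function.update_self, Function.update_of_ne hxc] at he
        have := hb x ((hcell x).mpr ⟨hx, hxc⟩)
        omega
      · rw [Function.update_of_ne hxc, Function.update_of_ne hyc] at he
        exact hinj x y ((hcell x).mpr ⟨hx, hxc⟩) ((hcell y).mpr ⟨hy, hyc⟩) he
    · intro i j hx
      have h1 : (i, j) ≠ c := by
        rintro rfl; exact hr hx
      rw [Function.update_of_ne h1]
      by_cases h2 : (i, j + 1) = c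
      · rw [h2, Function.update_self]
        by_cases h3 : IsCell s' (i, j)
        · have := hb _ h3; omega
        · rw [h0 _ h3]; omega
      · rw [Function.update_of_ne h2]
        exact hrow i j ((hcell _).mpr ⟨hx, h2⟩)
    · intro i j hx
      have h1 : (i, j) ≠ c := by
        rintro rfl; exact hbl hx
      rw [Function.update_of_ne h1]
      by_cases h2 : (i + 1, j) = c
      · rw [h2, Function.update_self]
        by_cases h3 : IsCell s' (i, j)
        · have := hb _ h3; omega
        · rw [h0 _ h3]; omega
      · rw [Function.update_of_ne h2]
        exact hcol i j ((hcell _).mpr ⟨hx, h2⟩)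
  · -- value at c is s.sum
    obtain ⟨T, hT⟩ := T
    dsimp only
    simp
  · -- left inverse
    rintro ⟨T, hT, hTc⟩
    ext x
    dsimp only
    simp only [Function.update_idem]
    by_cases hxc : x = c
    · subst hxc; simp [hTc]
    · rw [Function.update_of_ne hxc]
  · -- right inverse
    rintro ⟨T, hT⟩
    ext x
    dsimp only
    simp only [Function.update_idem]
    by_cases hxc : x = c
    · subst hxc; simp [hT.1 _ hcc]
    · rw [Function.update_of_ne hxc]




def ShA (a b m : ℕ) : List ℕ := a :: b :: List.replicate m 1

lemma getD_ShA (a b m i : ℕ) :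
    (ShA a b m).getD i 0 = if i = 0 then a else if i = 1 then b
      else if i < m + 2 then 1 else 0 := by
  match i with
  | 0 => rfl
  | 1 => rfl
  | (n+2) =>
    simp only [ShA, List.getD_cons_succ]
    rcases lt_or_ge n m with h | h
    · rw [List.getD_eq_getElem _ _ (by simpa using h)]
      simp [h]
    · rw [List.getD_eq_default _ _ (by simpa using h)]
      have : ¬ (n + 2 < m + 2) := by omega
      simp [this]

lemma cell_ShA (a b m i j : ℕ) :
    IsCell (ShA a b m) (i, j) ↔
      (i = 0 ∧ j < a) ∨ (i = 1 ∧ j < b) ∨ (2 ≤ i ∧ i < m + 2 ∧ j = 0) := by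
  show j < _ ↔ _
  rw [getD_ShA]
  split_ifs with h1 h2 h3 <;> omega

lemma sum_ShA (a b m : ℕ) : (ShA a b m).sum = a + b + m := by
  simp [ShA, List.sum_replicate, smul_eq_mul]; ring

lemma cell_single (a i j : ℕ) : IsCell [a] (i, j) ↔ i = 0 ∧ j < a := by
  show j < _ ↔ _
  match i with
  | 0 => simp
  | (n+1) => simp [List.getD]

lemma not_cell_nil (c : ℕ × ℕ) : ¬ IsCell [0] c := by
  rw [show c = (c.1, c.2) from rfl, cell_single]; omega

lemma syt_nil (T : ℕ × ℕ → ℕ) : IsSYT [0] T ↔ T = fun _ => 0 := by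
  constructor
  · intro h
    funext x
    exact h.1 x (not_cell_nil x)
  · rintro rfl
    exact ⟨fun _ _ => rfl, fun c hc => absurd hc (not_cell_nil c),
      fun c c' hc _ _ => absurd hc (not_cell_nil c),
      fun i j hc => absurd hc (not_cell_nil _),
      fun i j hc => absurd hc (not_cell_nil _)⟩

lemma sytCount_single (a : ℕ) : sytCount [a] = 1 := by
  induction a with
  | zero =>
    rw [sytCount_eq_ncard]
    have : {T : ℕ × ℕ → ℕ | IsSYT [0] T} = {fun _ => 0} := by
      ext T; simpa using syt_nil T
    rw [this, Set.ncard_singleton]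
  | succ a ih =>
    rw [sytCount_eq_ncard]
    have hsum : ([a+1] : List ℕ).sum = a + 1 := by simp
    have hset : {T : ℕ × ℕ → ℕ | IsSYT [a+1] T}
        = {T : ℕ × ℕ → ℕ | IsSYT [a+1] T ∧ T (0, a) = ([a+1] : List ℕ).sum} := by
      ext T
      simp only [Set.mem_setOf_eq]
      refine ⟨fun hT => ⟨hT, ?_⟩, And.left⟩
      obtain ⟨⟨i, j⟩, hc, hv, hrr, _⟩ := max_corner hT (by rw [hsum]; omega)
      rw [cell_single] at hc
      rw [cell_single] at hrr
      have : i = 0 ∧ j = a := by omega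
      obtain ⟨rfl, rfl⟩ := this
      exact hv
    have hrem := ncard_remove [a+1] [a] (0, a) ?_ ?_ ?_ ?_ ?_
    · rw [hset, hrem, ih]
    · intro ⟨i, j⟩
      rw [cell_single, cell_single]
      simp only [ne_eq, Prod.mk.injEq, not_and]
      constructor
      · intro h; exact ⟨⟨h.1, by omega⟩, fun h0 => by omega⟩
      · rintro ⟨⟨rfl, hj⟩, h2⟩
        exact ⟨rfl, by have := h2 rfl; omega⟩
    · rw [cell_single]; omega
    · rw [cell_single]; omega
    · rw [cell_single]; omega
    · simp

lemma corner_classify (a b m i j : ℕ) (hb : 1 ≤ b) (hab : b ≤ a)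
    (hc : IsCell (ShA a b m) (i, j))
    (h1 : ¬ IsCell (ShA a b m) (i, j + 1))
    (h2 : ¬ IsCell (ShA a b m) (i + 1, j)) :
    (b < a ∧ i = 0 ∧ j = a - 1) ∨ ((2 ≤ b ∨ m = 0) ∧ i = 1 ∧ j = b - 1) ∨
      (1 ≤ m ∧ i = m + 1 ∧ j = 0) := by
  rw [cell_ShA] at hc h1 h2
  push_neg at h1 h2
  rcases hc with ⟨rfl, hj⟩ | ⟨rfl, hj⟩ | ⟨hi2, hi, rfl⟩ <;> omega




lemma e1_lem (a b m : ℕ) (hb : 1 ≤ b) (hab : b ≤ a) :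
    {T : ℕ×ℕ→ℕ | IsSYT (ShA a b m) T ∧ T (0, a-1) = (ShA a b m).sum ∧ b < a}.ncard
      = if b < a then sytCount (ShA (a-1) b m) else 0 := by
  by_cases hba : b < a
  · rw [if_pos hba]
    have hset : {T : ℕ×ℕ→ℕ | IsSYT (ShA a b m) T ∧ T (0, a-1) = (ShA a b m).sum ∧ b < a}
        = {T : ℕ×ℕ→ℕ | IsSYT (ShA a b m) T ∧ T (0, a-1) = (ShA a b m).sum} := by
      ext T; simp [hba]
    rw [hset]
    apply ncard_remove (ShA a b m) (ShA (a-1) b m) (0, a-1)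
    · rintro ⟨i, j⟩
      rw [cell_ShA, cell_ShA]
      simp only [ne_eq, Prod.mk.injEq, not_and]
      omega
    · rw [cell_ShA]; omega
    · show ¬ IsCell _ (0, (a-1) + 1)
      rw [cell_ShA]; omega
    · show ¬ IsCell _ (0 + 1, a-1)
      rw [cell_ShA]; omega
    · rw [sum_ShA, sum_ShA]; omega
  · rw [if_neg hba]
    have hset : {T : ℕ×ℕ→ℕ | IsSYT (ShA a b m) T ∧ T (0, a-1) = (ShA a b m).sum ∧ b < a}
        = ∅ := by
      ext T; simp only [Set.mem_setOf_eq, Set.mem_empty_iff_false, iff_false]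
      rintro ⟨_, _, h⟩; exact hba h
    rw [hset, Set.ncard_empty]

lemma e2_lem (a b m : ℕ) (hb : 1 ≤ b) (hab : b ≤ a) :
    {T : ℕ×ℕ→ℕ | IsSYT (ShA a b m) T ∧ T (1, b-1) = (ShA a b m).sum ∧ (2 ≤ b ∨ m = 0)}.ncard
      = if 2 ≤ b then sytCount (ShA a (b-1) m) else if m = 0 then 1 else 0 := by
  by_cases hb2 : 2 ≤ b
  · rw [if_pos hb2]
    have hset : {T : ℕ×ℕ→ℕ | IsSYT (ShA a b m) T ∧ T (1, b-1) = (ShA a b m).sum ∧ (2 ≤ b ∨ m = 0)}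
        = {T : ℕ×ℕ→ℕ | IsSYT (ShA a b m) T ∧ T (1, b-1) = (ShA a b m).sum} := by
      ext T; simp [hb2]
    rw [hset]
    apply ncard_remove (ShA a b m) (ShA a (b-1) m) (1, b-1)
    · rintro ⟨i, j⟩
      rw [cell_ShA, cell_ShA]
      simp only [ne_eq, Prod.mk.injEq, not_and]
      omega
    · rw [cell_ShA]; omega
    · show ¬ IsCell _ (1, (b-1) + 1)
      rw [cell_ShA]; omega
    · show ¬ IsCell _ (1 + 1, b-1)
      rw [cell_ShA]; omega
    · rw [sum_ShA, sum_ShA]; omega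
  · have hb1 : b = 1 := by omega
    subst hb1
    rw [if_neg hb2]
    by_cases hm : m = 0
    · subst hm
      rw [if_pos rfl]
      have hset : {T : ℕ×ℕ→ℕ | IsSYT (ShA a 1 0) T ∧ T (1, 1-1) = (ShA a 1 0).sum ∧ (2 ≤ 1 ∨ 0 = 0)}
          = {T : ℕ×ℕ→ℕ | IsSYT (ShA a 1 0) T ∧ T (1, 0) = (ShA a 1 0).sum} := by
        ext T; simp
      rw [hset]
      have hr := ncard_remove (ShA a 1 0) [a] (1, 0) ?_ ?_ ?_ ?_ ?_
      · rw [hr, sytCount_single]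
      · rintro ⟨i, j⟩
        rw [cell_single, cell_ShA]
        simp only [ne_eq, Prod.mk.injEq, not_and]
        omega
      · rw [cell_ShA]; omega
      · show ¬ IsCell _ (1, 0 + 1)
        rw [cell_ShA]; omega
      · show ¬ IsCell _ (1 + 1, 0)
        rw [cell_ShA]; omega
      · rw [sum_ShA]; simp
    · rw [if_neg hm]
      have hset : {T : ℕ×ℕ→ℕ | IsSYT (ShA a 1 m) T ∧ T (1, 1-1) = (ShA a 1 m).sum ∧ (2 ≤ 1 ∨ m = 0)}
          = ∅ := by
        ext T; simp only [Set.mem_setOf_eq, Set.mem_empty_iff_false, iff_false]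
        rintro ⟨_, _, h | h⟩
        · omega
        · exact hm h
      rw [hset, Set.ncard_empty]

lemma e3_lem (a b m : ℕ) (hb : 1 ≤ b) (hab : b ≤ a) :
    {T : ℕ×ℕ→ℕ | IsSYT (ShA a b m) T ∧ T (m+1, 0) = (ShA a b m).sum ∧ 1 ≤ m}.ncard
      = if 1 ≤ m then sytCount (ShA a b (m-1)) else 0 := by
  by_cases hm : 1 ≤ m
  · rw [if_pos hm]
    have hset : {T : ℕ×ℕ→ℕ | IsSYT (ShA a b m) T ∧ T (m+1, 0) = (ShA a b m).sum ∧ 1 ≤ m}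
        = {T : ℕ×ℕ→ℕ | IsSYT (ShA a b m) T ∧ T (m+1, 0) = (ShA a b m).sum} := by
      ext T; simp [hm]
    rw [hset]
    apply ncard_remove (ShA a b m) (ShA a b (m-1)) (m+1, 0)
    · rintro ⟨i, j⟩
      rw [cell_ShA, cell_ShA]
      simp only [ne_eq, Prod.mk.injEq, not_and]
      omega
    · rw [cell_ShA]; omega
    · show ¬ IsCell _ (m+1, 0 + 1)
      rw [cell_ShA]; omega
    · show ¬ IsCell _ (m+1+1, 0)
      rw [cell_ShA]; omega
    · rw [sum_ShA, sum_ShA]; omega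
  · rw [if_neg hm]
    have hset : {T : ℕ×ℕ→ℕ | IsSYT (ShA a b m) T ∧ T (m+1, 0) = (ShA a b m).sum ∧ 1 ≤ m}
        = ∅ := by
      ext T; simp only [Set.mem_setOf_eq, Set.mem_empty_iff_false, iff_false]
      rintro ⟨_, _, h⟩; exact hm h
    rw [hset, Set.ncard_empty]

lemma F2_rec (a b m : ℕ) (hb : 1 ≤ b) (hab : b ≤ a) :
    sytCount (ShA a b m) =
      (if b < a then sytCount (ShA (a-1) b m) else 0) +
      (if 2 ≤ b then sytCount (ShA a (b-1) m) else if m = 0 then 1 else 0) +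
      (if 1 ≤ m then sytCount (ShA a b (m-1)) else 0) := by
  have ha : 1 ≤ a := le_trans hb hab
  have hsum : (ShA a b m).sum = a + b + m := sum_ShA a b m
  have hU : {T : ℕ×ℕ→ℕ | IsSYT (ShA a b m) T} =
      ({T : ℕ×ℕ→ℕ | IsSYT (ShA a b m) T ∧ T (0, a-1) = (ShA a b m).sum ∧ b < a} ∪
       {T : ℕ×ℕ→ℕ | IsSYT (ShA a b m) T ∧ T (1, b-1) = (ShA a b m).sum ∧ (2 ≤ b ∨ m = 0)}) ∪
      {T : ℕ×ℕ→ℕ | IsSYT (ShA a b m) T ∧ T (m+1, 0) = (ShA a b m).sum ∧ 1 ≤ m} := by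
    ext T
    simp only [Set.mem_setOf_eq, Set.mem_union]
    constructor
    · intro hT
      obtain ⟨⟨i, j⟩, hc, hv, h1, h2⟩ := max_corner hT (by rw [hsum]; omega)
      rcases corner_classify a b m i j hb hab hc h1 h2 with
        ⟨hlt, rfl, rfl⟩ | ⟨hg, rfl, rfl⟩ | ⟨hm, rfl, rfl⟩
      · exact Or.inl (Or.inl ⟨hT, hv, hlt⟩)
      · exact Or.inl (Or.inr ⟨hT, hv, hg⟩)
      · exact Or.inr ⟨hT, hv, hm⟩
    · rintro ((⟨h, _⟩ | ⟨h, _⟩) | ⟨h, _⟩) <;> exact h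
  have hfin : ∀ (P : (ℕ×ℕ→ℕ) → Prop), {T : ℕ×ℕ→ℕ | IsSYT (ShA a b m) T ∧ P T}.Finite :=
    fun P => (setFinite _).subset (fun T hT => hT.1)
  have hAB : Disjoint {T : ℕ×ℕ→ℕ | IsSYT (ShA a b m) T ∧ T (0, a-1) = (ShA a b m).sum ∧ b < a}
      {T : ℕ×ℕ→ℕ | IsSYT (ShA a b m) T ∧ T (1, b-1) = (ShA a b m).sum ∧ (2 ≤ b ∨ m = 0)} := by
    rw [Set.disjoint_left]
    rintro T ⟨hT, hv1, _⟩ ⟨_, hv2, _⟩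
    have c1 : IsCell (ShA a b m) (0, a-1) := by rw [cell_ShA]; omega
    have c2 : IsCell (ShA a b m) (1, b-1) := by rw [cell_ShA]; omega
    have := hT.2.2.1 _ _ c1 c2 (hv1.trans hv2.symm)
    simp [Prod.ext_iff] at this
  have hAC : Disjoint {T : ℕ×ℕ→ℕ | IsSYT (ShA a b m) T ∧ T (0, a-1) = (ShA a b m).sum ∧ b < a}
      {T : ℕ×ℕ→ℕ | IsSYT (ShA a b m) T ∧ T (m+1, 0) = (ShA a b m).sum ∧ 1 ≤ m} := by
    rw [Set.disjoint_left]
    rintro T ⟨hT, hv1, _⟩ ⟨_, hv2, hm⟩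
    have c1 : IsCell (ShA a b m) (0, a-1) := by rw [cell_ShA]; omega
    have c2 : IsCell (ShA a b m) (m+1, 0) := by rw [cell_ShA]; omega
    have := hT.2.2.1 _ _ c1 c2 (hv1.trans hv2.symm)
    rw [Prod.ext_iff] at this
    omega
  have hBC : Disjoint {T : ℕ×ℕ→ℕ | IsSYT (ShA a b m) T ∧ T (1, b-1) = (ShA a b m).sum ∧ (2 ≤ b ∨ m = 0)}
      {T : ℕ×ℕ→ℕ | IsSYT (ShA a b m) T ∧ T (m+1, 0) = (ShA a b m).sum ∧ 1 ≤ m} := by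
    rw [Set.disjoint_left]
    rintro T ⟨hT, hv1, _⟩ ⟨_, hv2, hm⟩
    have c1 : IsCell (ShA a b m) (1, b-1) := by rw [cell_ShA]; omega
    have c2 : IsCell (ShA a b m) (m+1, 0) := by rw [cell_ShA]; omega
    have := hT.2.2.1 _ _ c1 c2 (hv1.trans hv2.symm)
    rw [Prod.ext_iff] at this
    omega
  rw [sytCount_eq_ncard, hU,
    Set.ncard_union_eq (Set.disjoint_union_left.mpr ⟨hAC, hBC⟩) ((hfin _).union (hfin _)) (hfin _),
    Set.ncard_union_eq hAB (hfin _) (hfin _),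
    e1_lem a b m hb hab, e2_lem a b m hb hab, e3_lem a b m hb hab]




noncomputable def cf (c k m : ℕ) : ℚ :=
  ((2*c+2+k+m).factorial * (k+1)) /
    ((c+k+m+2) * (c+m+1) * (c+1+k).factorial * c.factorial * m.factorial)

lemma fact_ne (n : ℕ) : ((n.factorial : ℕ) : ℚ) ≠ 0 :=
  Nat.cast_ne_zero.mpr (Nat.factorial_ne_zero _)

lemma id1 : cf 0 0 0 = 1 := by
  norm_num [cf, Nat.factorial]

lemma id2 (m : ℕ) : cf 0 0 (m+1) = cf 0 0 m := by
  unfold cf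
  rw [show 2*0+2+0+(m+1) = (m+2)+1 by omega, show 2*0+2+0+m = (m+1)+1 by omega]
  simp only [Nat.factorial_succ (m+2), Nat.factorial_succ (m+1), Nat.factorial_succ m]
  push_cast
  have g1 : (m:ℚ)+1+2 ≠ 0 := by positivity
  have g2 : (m:ℚ)+1+1 ≠ 0 := by positivity
  have g3 : (m:ℚ)+2 ≠ 0 := by positivity
  have g4 : (m:ℚ)+1 ≠ 0 := by positivity
  have f1 := fact_ne m
  field_simp
  ring

lemma id3 (c : ℕ) : cf (c+1) 0 0 = cf c 1 0 := by
  unfold cf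
  rw [show 2*(c+1)+2+0+0 = (2*c+3)+1 by omega, show 2*c+2+1+0 = (2*c+3) by omega,
    show (c+1)+1+0 = c+1+1 by omega]
  simp only [Nat.factorial_succ (2*c+3), Nat.factorial_succ (c+1), Nat.factorial_succ c]
  push_cast
  have g1 : (c:ℚ)+1+0+0+2 ≠ 0 := by positivity
  have g2 : (c:ℚ)+1+0+1 ≠ 0 := by positivity
  have g3 : (c:ℚ)+1+0+2 ≠ 0 := by positivity
  have g4 : (c:ℚ)+0+1 ≠ 0 := by positivity
  have f1 := fact_ne (2*c+3)
  have f2 := fact_ne c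
  field_simp
  ring

lemma id4 (c m : ℕ) : cf (c+1) 0 (m+1) = cf c 1 (m+1) + cf (c+1) 0 m := by
  unfold cf
  rw [show 2*(c+1)+2+0+(m+1) = (2*c+m+4)+1 by omega,
    show 2*c+2+1+(m+1) = 2*c+m+4 by omega,
    show 2*(c+1)+2+0+m = 2*c+m+4 by omega,
    show (c+1)+1+0 = (c+1)+1 by omega]
  simp only [Nat.factorial_succ (2*c+m+4), Nat.factorial_succ (c+1), Nat.factorial_succ c,
    Nat.factorial_succ m]
  push_cast
  have g1 : (c:ℚ)+1+0+(m+1)+2 ≠ 0 := by positivity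
  have g2 : (c:ℚ)+1+(m+1)+1 ≠ 0 := by positivity
  have g3 : (c:ℚ)+1+(m+1)+2 ≠ 0 := by positivity
  have g4 : (c:ℚ)+(m+1)+1 ≠ 0 := by positivity
  have g5 : (c:ℚ)+1+0+m+2 ≠ 0 := by positivity
  have g6 : (c:ℚ)+1+m+1 ≠ 0 := by positivity
  have f1 := fact_ne (2*c+m+4)
  have f2 := fact_ne c
  have f3 := fact_ne m
  field_simp
  ring

lemma id5 (k : ℕ) : cf 0 (k+1) 0 = cf 0 k 0 + 1 := by
  unfold cf
  rw [show 2*0+2+(k+1)+0 = (k+2)+1 by omega, show 2*0+2+k+0 = (k+1)+1 by omega,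
    show 0+1+(k+1) = (k+1)+1 by omega, show 0+1+k = k+1 by omega]
  simp only [Nat.factorial_succ (k+2), Nat.factorial_succ (k+1), Nat.factorial_succ k]
  push_cast
  have g1 : (k:ℚ)+1+0+2 ≠ 0 := by positivity
  have g2 : (k:ℚ)+0+2 ≠ 0 := by positivity
  have f1 := fact_ne k
  field_simp
  ring

lemma id6 (k m : ℕ) : cf 0 (k+1) (m+1) = cf 0 k (m+1) + cf 0 (k+1) m := by
  unfold cf
  rw [show 2*0+2+(k+1)+(m+1) = (k+m+3)+1 by omega,
    show 2*0+2+k+(m+1) = k+m+3 by omega,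
    show 2*0+2+(k+1)+m = k+m+3 by omega,
    show 0+1+(k+1) = (k+1)+1 by omega,
    show 0+1+k = k+1 by omega]
  simp only [Nat.factorial_succ (k+m+3), Nat.factorial_succ (k+1), Nat.factorial_succ k,
    Nat.factorial_succ m]
  push_cast
  have g1 : (k:ℚ)+1+(m+1)+2 ≠ 0 := by positivity
  have g2 : (m:ℚ)+1+1 ≠ 0 := by positivity
  have g3 : (k:ℚ)+(m+1)+2 ≠ 0 := by positivity
  have g4 : (k:ℚ)+1+m+2 ≠ 0 := by positivity
  have g5 : (m:ℚ)+1 ≠ 0 := by positivity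
  have f1 := fact_ne (k+m+3)
  have f2 := fact_ne k
  have f3 := fact_ne m
  field_simp
  ring

lemma id7 (c k : ℕ) : cf (c+1) (k+1) 0 = cf (c+1) k 0 + cf c (k+2) 0 := by
  unfold cf
  rw [show 2*(c+1)+2+(k+1)+0 = (2*c+k+4)+1 by omega,
    show 2*(c+1)+2+k+0 = 2*c+k+4 by omega,
    show 2*c+2+(k+2)+0 = 2*c+k+4 by omega,
    show (c+1)+1+(k+1) = (c+k+2)+1 by omega,
    show (c+1)+1+k = c+k+2 by omega,
    show c+1+(k+2) = (c+k+2)+1 by omega]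
  simp only [Nat.factorial_succ (2*c+k+4), Nat.factorial_succ (c+k+2), Nat.factorial_succ c]
  push_cast
  have g1 : (c:ℚ)+1+(k+1)+0+2 ≠ 0 := by positivity
  have g2 : (c:ℚ)+1+0+1 ≠ 0 := by positivity
  have g3 : (c:ℚ)+1+k+0+2 ≠ 0 := by positivity
  have g4 : (c:ℚ)+(k+2)+0+2 ≠ 0 := by positivity
  have g5 : (c:ℚ)+0+1 ≠ 0 := by positivity
  have f1 := fact_ne (2*c+k+4)
  have f2 := fact_ne (c+k+2)
  have f3 := fact_ne c
  field_simp
  ring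

lemma id8 (c k m : ℕ) :
    cf (c+1) (k+1) (m+1) = cf (c+1) k (m+1) + cf c (k+2) (m+1) + cf (c+1) (k+1) m := by
  unfold cf
  rw [show 2*(c+1)+2+(k+1)+(m+1) = (2*c+k+m+5)+1 by omega,
    show 2*(c+1)+2+k+(m+1) = 2*c+k+m+5 by omega,
    show 2*c+2+(k+2)+(m+1) = 2*c+k+m+5 by omega,
    show 2*(c+1)+2+(k+1)+m = 2*c+k+m+5 by omega,
    show (c+1)+1+(k+1) = (c+k+2)+1 by omega,
    show (c+1)+1+k = c+k+2 by omega,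
    show c+1+(k+2) = (c+k+2)+1 by omega]
  simp only [Nat.factorial_succ (2*c+k+m+5), Nat.factorial_succ (c+k+2),
    Nat.factorial_succ c, Nat.factorial_succ m]
  push_cast
  have f1 := fact_ne (2*c+k+m+5)
  have f2 := fact_ne (c+k+2)
  have f3 := fact_ne c
  have f4 := fact_ne m
  have g1 : (c:ℚ)+1+(k+1)+(m+1)+2 ≠ 0 := by positivity
  have g2 : (c:ℚ)+1+(m+1)+1 ≠ 0 := by positivity
  have g3 : (c:ℚ)+1+k+(m+1)+2 ≠ 0 := by positivity
  have g4 : (c:ℚ)+(k+2)+(m+1)+2 ≠ 0 := by positivity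
  have g5 : (c:ℚ)+(m+1)+1 ≠ 0 := by positivity
  have g6 : (c:ℚ)+1+(k+1)+m+2 ≠ 0 := by positivity
  have g7 : (c:ℚ)+1+m+1 ≠ 0 := by positivity
  field_simp
  ring




lemma main_count : ∀ t : ℕ, ∀ c k m : ℕ, 2*c+k+m = t →
    (sytCount (ShA (c+1+k) (c+1) m) : ℚ) = cf c k m := by
  intro t
  induction t using Nat.strong_induction_on with
  | _ t IH =>
    intro c k m ht
    rcases k with _ | k
    · rcases c with _ | c
      · rcases m with _ | m
        · -- k=0 c=0 m=0
          have hrec := F2_rec (0+1+0) (0+1) 0 (by omega) (by omega)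
          rw [if_neg (show ¬ (0+1 < 0+1+0) by omega),
              if_neg (show ¬ (2 ≤ 0+1) by omega),
              if_pos (show (0:ℕ) = 0 from rfl),
              if_neg (show ¬ ((1:ℕ) ≤ 0) by omega)] at hrec
          rw [hrec]
          rw [id1]
          norm_num
        · -- k=0 c=0 m+1
          have hrec := F2_rec (0+1+0) (0+1) (m+1) (by omega) (by omega)
          rw [if_neg (show ¬ (0+1 < 0+1+0) by omega),
              if_neg (show ¬ (2 ≤ 0+1) by omega),
              if_neg (show ¬ (m+1 = 0) by omega),
              if_pos (show 1 ≤ m+1 by omega),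
              show m+1-1 = m by omega] at hrec
          rw [hrec]
          have i1 := IH (2*0+0+m) (by omega) 0 0 m rfl
          push_cast
          rw [i1, id2]
          norm_num
      · rcases m with _ | m
        · -- k=0 c+1 m=0
          have hrec := F2_rec (c+1+1+0) (c+1+1) 0 (by omega) (by omega)
          rw [if_neg (show ¬ (c+1+1 < c+1+1+0) by omega),
              if_pos (show 2 ≤ c+1+1 by omega),
              if_neg (show ¬ ((1:ℕ) ≤ 0) by omega),
              show c+1+1-1 = c+1 by omega] at hrec
          rw [hrec]
          have i1 := IH (2*c+1+0) (by omega) c 1 0 rfl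
          rw [show c+1+1 = c+1+1+0 by omega] at i1
          push_cast
          rw [i1, id3]
          norm_num
        · -- k=0 c+1 m+1
          have hrec := F2_rec (c+1+1+0) (c+1+1) (m+1) (by omega) (by omega)
          rw [if_neg (show ¬ (c+1+1 < c+1+1+0) by omega),
              if_pos (show 2 ≤ c+1+1 by omega),
              if_pos (show 1 ≤ m+1 by omega),
              show c+1+1-1 = c+1 by omega,
              show m+1-1 = m by omega] at hrec
          rw [hrec]
          have i1 := IH (2*c+1+(m+1)) (by omega) c 1 (m+1) rfl
          rw [show c+1+1 = c+1+1+0 by omega] at i1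
          have i2 := IH (2*(c+1)+0+m) (by omega) (c+1) 0 m rfl
          push_cast
          rw [i1, i2, id4]
          norm_num
    · rcases c with _ | c
      · rcases m with _ | m
        · -- k+1 c=0 m=0
          have hrec := F2_rec (0+1+(k+1)) (0+1) 0 (by omega) (by omega)
          rw [if_pos (show 0+1 < 0+1+(k+1) by omega),
              if_neg (show ¬ (2 ≤ 0+1) by omega),
              if_pos (show (0:ℕ) = 0 from rfl),
              if_neg (show ¬ ((1:ℕ) ≤ 0) by omega),
              show 0+1+(k+1)-1 = 0+1+k by omega] at hrec
          rw [hrec]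
          have i1 := IH (2*0+k+0) (by omega) 0 k 0 rfl
          push_cast
          rw [i1, id5]
          norm_num
        · -- k+1 c=0 m+1
          have hrec := F2_rec (0+1+(k+1)) (0+1) (m+1) (by omega) (by omega)
          rw [if_pos (show 0+1 < 0+1+(k+1) by omega),
              if_neg (show ¬ (2 ≤ 0+1) by omega),
              if_neg (show ¬ (m+1 = 0) by omega),
              if_pos (show 1 ≤ m+1 by omega),
              show 0+1+(k+1)-1 = 0+1+k by omega,
              show m+1-1 = m by omega] at hrec
          rw [hrec]
          have i1 := IH (2*0+k+(m+1)) (by omega) 0 k (m+1) rfl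
          have i2 := IH (2*0+(k+1)+m) (by omega) 0 (k+1) m rfl
          push_cast
          rw [i1, i2, id6]
          norm_num
      · rcases m with _ | m
        · -- k+1 c+1 m=0
          have hrec := F2_rec (c+1+1+(k+1)) (c+1+1) 0 (by omega) (by omega)
          rw [if_pos (show c+1+1 < c+1+1+(k+1) by omega),
              if_pos (show 2 ≤ c+1+1 by omega),
              if_neg (show ¬ ((1:ℕ) ≤ 0) by omega),
              show c+1+1+(k+1)-1 = c+1+1+k by omega,
              show c+1+1-1 = c+1 by omega] at hrec
          rw [hrec]
          have i1 := IH (2*(c+1)+k+0) (by omega) (c+1) k 0 rfl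
          have i2 := IH (2*c+(k+2)+0) (by omega) c (k+2) 0 rfl
          rw [show c+1+(k+2) = c+1+1+(k+1) by omega] at i2
          push_cast
          rw [i1, i2, id7]
          norm_num
        · -- k+1 c+1 m+1
          have hrec := F2_rec (c+1+1+(k+1)) (c+1+1) (m+1) (by omega) (by omega)
          rw [if_pos (show c+1+1 < c+1+1+(k+1) by omega),
              if_pos (show 2 ≤ c+1+1 by omega),
              if_pos (show 1 ≤ m+1 by omega),
              show c+1+1+(k+1)-1 = c+1+1+k by omega,
              show c+1+1-1 = c+1 by omega,
              show m+1-1 = m by omega] at hrec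
          rw [hrec]
          have i1 := IH (2*(c+1)+k+(m+1)) (by omega) (c+1) k (m+1) rfl
          have i2 := IH (2*c+(k+2)+(m+1)) (by omega) c (k+2) (m+1) rfl
          rw [show c+1+(k+2) = c+1+1+(k+1) by omega] at i2
          have i3 := IH (2*(c+1)+(k+1)+m) (by omega) (c+1) (k+1) m rfl
          push_cast
          rw [i1, i2, i3, id8]



end SYTAux

/-- For `n ≥ 4` and `d ≤ n - 3`, the number of standard Young tableaux of shape
`(d+1, d+1, 1^(n-d-3))` equals `(1/(n+d)) * C(n+d, d+1) * C(n-3, d)`. -/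
theorem syt_associahedron_count (n d : ℕ) (hn : 4 ≤ n) (hd : d ≤ n - 3) :
    (sytCount ((d + 1) :: (d + 1) :: List.replicate (n - d - 3) 1) : ℚ) =
      (1 / ((n : ℚ) + d)) * ((n + d).choose (d + 1)) * ((n - 3).choose d) := by
  obtain ⟨m, rfl⟩ : ∃ m, n = d + m + 3 := ⟨n - d - 3, by omega⟩
  have e0 : d + m + 3 - d - 3 = m := by omega
  rw [e0]
  have h := SYTAux.main_count (2*d+0+m) d 0 m rfl
  rw [show d+1+0 = d+1 by omega] at h
  rw [show ((d+1) :: (d+1) :: List.replicate m 1) = SYTAux.ShA (d+1) (d+1) m from rfl, h]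
  rw [show d+m+3-3 = d+m by omega]
  rw [Nat.cast_choose ℚ (show d+1 ≤ d+m+3+d by omega),
      Nat.cast_choose ℚ (show d ≤ d+m by omega)]
  rw [show d+m+3+d-(d+1) = (d+m+1)+1 by omega, show d+m-d = m by omega]
  unfold SYTAux.cf
  rw [show 2*d+2+0+m = 2*d+m+2 by omega,
      show d+m+3+d = (2*d+m+2)+1 by omega,
      show d+m+1 = (d+m)+1 by omega]
  rw [Nat.factorial_succ (2*d+m+2), Nat.factorial_succ ((d+m)+1), Nat.factorial_succ (d+m)]
  push_cast
  have f1 := SYTAux.fact_ne (2*d+m+2)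
  have f2 := SYTAux.fact_ne (d+m)
  have f3 := SYTAux.fact_ne (d+1)
  have f4 := SYTAux.fact_ne d
  have f5 := SYTAux.fact_ne m
  have g1 : (d:ℚ)+0+m+2 ≠ 0 := by positivity
  have g2 : (d:ℚ)+m+1 ≠ 0 := by positivity
  have g3 : (d:ℚ)+m+3+d ≠ 0 := by positivity
  have g4 : (d:ℚ)+m+2 ≠ 0 := by positivity
  have g5 : (2*(d:ℚ)+m+2)+1 ≠ 0 := by positivity
  field_simp
  ring
end

section
/- There is an involution σ on the set of standard Young tableaux of shapes (d+1, d+1, 1^(n-d-3)) (over all valid n, d) whose fixed points are exactly the tableaux in which the entries n+1, ..., n+d-1 all lie in the second row, and such that for any non-fixed tableau X, the number of boxes of σ(X) differs from that of X by exactly 1. -/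
/-- The associahedron shape `(d+1, d+1, 1^(n-d-3))`, with `n + d - 1` boxes. -/
def assocShape (n d : ℕ) : List ℕ := (d + 1) :: (d + 1) :: List.replicate (n - d - 3) 1

/-- An associahedron tableau: a triple `(n, d, T)` with `n ≥ 4`, `1 ≤ d ≤ n - 3`,
and `T` a standard Young tableau of shape `(d+1, d+1, 1^(n-d-3))`. -/
def AssocTableau : Type :=
  {x : ℕ × ℕ × ((ℕ × ℕ) → ℕ) //
    4 ≤ x.1 ∧ 1 ≤ x.2.1 ∧ x.2.1 ≤ x.1 - 3 ∧ IsSYT (assocShape x.1 x.2.1) x.2.2}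

/-- The number of boxes `n + d - 1` of an associahedron tableau. -/
def boxes (x : AssocTableau) : ℕ := x.1.1 + x.1.2.1 - 1

/-- The tableau restricts to a syzygy tableau: all of the entries
`n+1, …, n+d-1` lie in the second row. -/
def RestrictsToSyzygy (x : AssocTableau) : Prop :=
  ∀ k, x.1.1 + 1 ≤ k → k ≤ x.1.1 + x.1.2.1 - 1 →
    ∃ j, IsCell (assocShape x.1.1 x.1.2.1) (1, j) ∧ x.1.2.2 (1, j) = k

/-!
The last `d - 1` cells of the second row are `(1, 2), …, (1, d)`. Since the second row increases
and is bounded by `n + d - 1`, the entries `n + 1, …, n + d - 1` fill them exactly when `d ≤ 1` or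
`T (1, 2) > n`; these are the fixed points. Otherwise every entry larger than `T (1, d)` lies at the
bottom of the first column, and the largest entry can be removed from there
`min (n + d - 1 - T (1, d)) (n - T (1, 2))` times in a row before the tableau becomes fixed.
Putting `n + d` below the first column raises this depth by one and removing the largest entry
lowers it by one, so adding a box at even depth and removing one at odd depth is an involution
that changes `n`, hence the number of boxes, by one.
-/

open Finset Function

theorem List.sum_range_length_getD {M : Type*} [AddCommMonoid M] (l : List M) :
    ∑ i ∈ Finset.range l.length, l.getD i 0 = l.sum := by
  induction l with
  | nil => simp
  | cons a l ih => simp [Finset.sum_range_succ', ← ih, add_comm]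

section SYT

variable {shape : List ℕ} {T : ℕ × ℕ → ℕ}

theorem IsSYT.le_sum (hT : IsSYT shape T) (c : ℕ × ℕ) : T c ≤ shape.sum := by
  by_cases hc : IsCell shape c
  · exact (hT.2.1 c hc).2
  · simp [hT.1 c hc]

theorem IsSYT.add_sub_le (hT : IsSYT shape T) {i j j' : ℕ} (hjj' : j ≤ j')
    (hc : IsCell shape (i, j')) : T (i, j) + (j' - j) ≤ T (i, j') := by
  obtain ⟨k, rfl⟩ := Nat.exists_eq_add_of_le hjj'
  induction k with
  | zero => simp
  | succ k ih =>
    have hstep : T (i, j + k) < T (i, j + (k + 1)) := hT.2.2.2.1 i (j + k) hc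
    have := ih (by omega) (by simp only [IsCell] at hc ⊢; omega)
    omega

theorem IsSYT.exists_eq (hT : IsSYT shape T) {k : ℕ} (hk₁ : 1 ≤ k) (hk : k ≤ shape.sum) :
    ∃ c, IsCell shape c ∧ T c = k := by
  let cells := ((range shape.length).sigma fun i => range (shape.getD i 0)).map
    (Equiv.sigmaEquivProd ℕ ℕ).toEmbedding
  have hmem : ∀ c ∈ cells, IsCell shape c := by
    intro c hc
    simp only [cells, mem_map_equiv, mem_sigma, mem_range] at hc
    exact hc.2
  have hcard : #cells = shape.sum := by
    simp only [cells, card_map, card_sigma, card_range, List.sum_range_length_getD]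
  obtain ⟨c, hc, hck⟩ := surjOn_of_injOn_of_card_le T
    (t := Icc 1 shape.sum) (fun c hc => mem_Icc.2 (hT.2.1 c (hmem c hc)))
    (fun c hc c' hc' h => hT.2.2.1 c c' (hmem c hc) (hmem c' hc') h)
    (by rw [hcard, Nat.card_Icc, Nat.add_sub_cancel]) (mem_Icc.2 ⟨hk₁, hk⟩)
  exact ⟨c, hmem c hc, hck⟩

theorem IsSYT.not_isCell_of_eq_sum (hT : IsSYT shape T) {i j : ℕ} (h : T (i, j) = shape.sum) :
    ¬ IsCell shape (i, j + 1) ∧ ¬ IsCell shape (i + 1, j) :=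
  ⟨fun hc => (hT.2.2.2.1 i j hc).not_ge (h ▸ hT.le_sum _),
    fun hc => (hT.2.2.2.2 i j hc).not_ge (h ▸ hT.le_sum _)⟩

theorem IsSYT.update_sum_succ {shape' : List ℕ} {c₀ : ℕ × ℕ} (hT : IsSYT shape T)
    (hcell : ∀ c, IsCell shape' c ↔ IsCell shape c ∨ c = c₀) (hc₀ : ¬ IsCell shape c₀)
    (hright : ¬ IsCell shape' (c₀.1, c₀.2 + 1)) (hdown : ¬ IsCell shape' (c₀.1 + 1, c₀.2))
    (hsum : shape'.sum = shape.sum + 1) :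
    IsSYT shape' (update T c₀ (shape.sum + 1)) := by
  have hlt : ∀ c, T c < shape.sum + 1 := fun c => Nat.lt_succ_of_le (hT.le_sum c)
  have hne : ∀ c, IsCell shape c → c ≠ c₀ := fun c hc h => hc₀ (h ▸ hc)
  refine ⟨fun c hc => ?_, fun c hc => ?_, fun c c' hc hc' h => ?_, fun i j hc => ?_,
    fun i j hc => ?_⟩
  · rw [hcell, not_or] at hc
    rw [update_of_ne hc.2]
    exact hT.1 c hc.1
  · rcases (hcell c).1 hc with hc | rfl
    · rw [update_of_ne (hne c hc), hsum]
      exact ⟨(hT.2.1 c hc).1, (hlt c).le⟩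
    · simp [hsum]
  · rcases (hcell c).1 hc with hc | rfl <;> rcases (hcell c').1 hc' with hc' | hc'
    · rw [update_of_ne (hne c hc), update_of_ne (hne c' hc')] at h
      exact hT.2.2.1 c c' hc hc' h
    · subst hc'
      simp only [update_self, update_of_ne (hne c hc)] at h
      exact absurd h (hlt c).ne
    · simp only [update_self, update_of_ne (hne c' hc')] at h
      exact absurd h.symm (hlt c').ne
    · exact hc'.symm
  · by_cases h₀ : (i, j + 1) = c₀
    · rw [← h₀, update_self, update_of_ne (by simp)]
      exact hlt _
    · have h₁ : (i, j) ≠ c₀ := by rintro rfl; exact hright hc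
      rw [update_of_ne h₀, update_of_ne h₁]
      exact hT.2.2.2.1 i j (((hcell _).1 hc).resolve_right h₀)
  · by_cases h₀ : (i + 1, j) = c₀
    · rw [← h₀, update_self, update_of_ne (by simp)]
      exact hlt _
    · have h₁ : (i, j) ≠ c₀ := by rintro rfl; exact hdown hc
      rw [update_of_ne h₀, update_of_ne h₁]
      exact hT.2.2.2.2 i j (((hcell _).1 hc).resolve_right h₀)

theorem IsSYT.update_max_zero {shape' : List ℕ} {c₀ : ℕ × ℕ} (hT : IsSYT shape T)
    (hcell : ∀ c, IsCell shape c ↔ IsCell shape' c ∨ c = c₀) (hc₀ : ¬ IsCell shape' c₀)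
    (hsum : shape.sum = shape'.sum + 1) (hmax : T c₀ = shape.sum) :
    IsSYT shape' (update T c₀ 0) := by
  have hne : ∀ c, IsCell shape' c → c ≠ c₀ := fun c hc h => hc₀ (h ▸ hc)
  have hold : ∀ c, IsCell shape' c → IsCell shape c := fun c hc => (hcell c).2 (Or.inl hc)
  refine ⟨fun c hc => ?_, fun c hc => ?_, fun c c' hc hc' h => ?_, fun i j hc => ?_,
    fun i j hc => ?_⟩
  · by_cases h₀ : c = c₀
    · rw [h₀, update_self]
    · rw [update_of_ne h₀]
      exact hT.1 c fun hc' => hc (((hcell c).1 hc').resolve_right h₀)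
  · have hmax' : T c ≠ shape.sum := fun h =>
      hne c hc (hT.2.2.1 c c₀ (hold c hc) ((hcell c₀).2 (Or.inr rfl)) (h.trans hmax.symm))
    rw [update_of_ne (hne c hc)]
    have := hT.2.1 c (hold c hc)
    omega
  · rw [update_of_ne (hne c hc), update_of_ne (hne c' hc')] at h
    exact hT.2.2.1 c c' (hold c hc) (hold c' hc') h
  · rw [update_of_ne (hne _ hc)]
    by_cases h₀ : (i, j) = c₀
    · rw [h₀, update_self]
      exact (hT.2.1 _ (hold _ hc)).1
    · rw [update_of_ne h₀]
      exact hT.2.2.2.1 i j (hold _ hc)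
  · rw [update_of_ne (hne _ hc)]
    by_cases h₀ : (i, j) = c₀
    · rw [h₀, update_self]
      exact (hT.2.1 _ (hold _ hc)).1
    · rw [update_of_ne h₀]
      exact hT.2.2.2.2 i j (hold _ hc)

end SYT

section AssocShape

variable {n d : ℕ}

theorem isCell_assocShape_iff {i j : ℕ} :
    IsCell (assocShape n d) (i, j) ↔ i ≤ 1 ∧ j ≤ d ∨ 2 ≤ i ∧ i + d + 2 ≤ n ∧ j = 0 := by
  rcases i with _ | _ | i <;>
    simp [IsCell, assocShape, List.getD_eq_getElem?_getD, List.getElem?_replicate]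
  split <;> simp <;> omega

theorem isCell_assocShape_succ_iff {c : ℕ × ℕ} :
    IsCell (assocShape (n + 1) d) c ↔ IsCell (assocShape n d) c ∨ c = (n - d - 1, 0) := by
  obtain ⟨i, j⟩ := c
  simp only [isCell_assocShape_iff, Prod.mk.injEq]
  omega

theorem sum_assocShape (hnd : d + 3 ≤ n) : (assocShape n d).sum = n + d - 1 := by
  simp [assocShape]
  omega

end AssocShape

section AssocTableaux

variable {n d : ℕ} {T : ℕ × ℕ → ℕ}

theorem IsSYT.bottom_eq_of_second_row_lt (hT : IsSYT (assocShape n d) T) (hnd : d + 3 ≤ n)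
    (h : T (1, d) < n + d - 1) : d + 4 ≤ n ∧ T (n - d - 2, 0) = n + d - 1 := by
  obtain ⟨⟨i, j⟩, hc, hmax⟩ := hT.exists_eq (k := n + d - 1) (by omega) (sum_assocShape hnd).ge
  have hcorner := hT.not_isCell_of_eq_sum (hmax.trans (sum_assocShape hnd).symm)
  simp only [isCell_assocShape_iff] at hc hcorner
  obtain ⟨rfl, rfl⟩ | ⟨rfl, rfl, hn⟩ : i = 1 ∧ j = d ∨ i = n - d - 2 ∧ j = 0 ∧ d + 4 ≤ n := by
    omega
  · omega
  · exact ⟨hn, hmax⟩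

theorem IsSYT.forall_mem_second_row_iff (hT : IsSYT (assocShape n d) T) (hnd : d + 3 ≤ n) :
    (∀ k, n + 1 ≤ k → k ≤ n + d - 1 → ∃ j, IsCell (assocShape n d) (1, j) ∧ T (1, j) = k) ↔
      d ≤ 1 ∨ n < T (1, 2) := by
  have hrow : ∀ {j j'}, j ≤ j' → j' ≤ d → T (1, j) + (j' - j) ≤ T (1, j') := fun hj hj' =>
    hT.add_sub_le hj (isCell_assocShape_iff.2 (Or.inl ⟨le_rfl, hj'⟩))
  have hlast : T (1, d) ≤ n + d - 1 := sum_assocShape hnd ▸ hT.le_sum _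
  constructor
  · intro hall
    by_contra! hcon
    choose! col hcol hcolT using hall
    have hmaps : Set.MapsTo col (Icc (n + 1) (n + d - 1)) (Icc 3 d) := by
      intro k hk
      rw [coe_Icc, Set.mem_Icc] at hk
      have hkd := isCell_assocShape_iff.1 (hcol k hk.1 hk.2)
      have := hcolT k hk.1 hk.2
      have : ¬ col k ≤ 2 := fun h2 => by have := hrow h2 (by omega); omega
      simp only [coe_Icc, Set.mem_Icc]
      omega
    have hinj : Set.InjOn col (Icc (n + 1) (n + d - 1)) := by
      intro k hk k' hk' h
      rw [coe_Icc, Set.mem_Icc] at hk hk'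
      rw [← hcolT k hk.1 hk.2, ← hcolT k' hk'.1 hk'.2, h]
    have := card_le_card_of_injOn col hmaps hinj
    simp only [Nat.card_Icc] at this
    omega
  · rintro hsyz k hk hk'
    refine ⟨k - n + 1, isCell_assocShape_iff.2 (Or.inl ⟨le_rfl, by omega⟩), ?_⟩
    have := hrow (j := 2) (j' := k - n + 1) (by omega) (by omega)
    have := hrow (j := k - n + 1) (j' := d) (by omega) le_rfl
    omega

def addBottom (n d : ℕ) (T : ℕ × ℕ → ℕ) : ℕ × ℕ → ℕ := update T (n - d - 1, 0) (n + d)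

def removeBottom (n d : ℕ) (T : ℕ × ℕ → ℕ) : ℕ × ℕ → ℕ := update T (n - d - 2, 0) 0

theorem isSYT_addBottom (hT : IsSYT (assocShape n d) T) (hnd : d + 3 ≤ n) :
    IsSYT (assocShape (n + 1) d) (addBottom n d T) := by
  have h := hT.update_sum_succ (fun _ => isCell_assocShape_succ_iff)
    (by simp only [isCell_assocShape_iff]; omega) (by simp only [isCell_assocShape_iff]; omega)
    (by simp only [isCell_assocShape_iff]; omega)
    (by rw [sum_assocShape hnd, sum_assocShape (by omega)]; omega)
  rwa [sum_assocShape hnd, show n + d - 1 + 1 = n + d by omega] at h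

theorem isSYT_removeBottom (hT : IsSYT (assocShape n d) T) (hnd : d + 4 ≤ n)
    (hmax : T (n - d - 2, 0) = n + d - 1) :
    IsSYT (assocShape (n - 1) d) (removeBottom n d T) := by
  obtain ⟨m, rfl⟩ : ∃ m, n = m + 1 := ⟨n - 1, by omega⟩
  have hc₀ : m + 1 - d - 2 = m - d - 1 := by omega
  rw [removeBottom, hc₀, Nat.add_sub_cancel]
  refine hT.update_max_zero (fun _ => isCell_assocShape_succ_iff)
    (by simp only [isCell_assocShape_iff]; omega)
    (by rw [sum_assocShape (by omega), sum_assocShape (by omega)]; omega)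
    (by rw [← hc₀, hmax, sum_assocShape (by omega)])

theorem addBottom_second_row (hnd : d + 3 ≤ n) (j : ℕ) : addBottom n d T (1, j) = T (1, j) :=
  update_of_ne (by simp only [ne_eq, Prod.mk.injEq]; omega) _ _

theorem removeBottom_second_row (hnd : d + 4 ≤ n) (j : ℕ) :
    removeBottom n d T (1, j) = T (1, j) :=
  update_of_ne (by simp only [ne_eq, Prod.mk.injEq]; omega) _ _

theorem removeBottom_succ_addBottom (hT : IsSYT (assocShape n d) T) (hnd : d + 3 ≤ n) :
    removeBottom (n + 1) d (addBottom n d T) = T := by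
  rw [removeBottom, addBottom, show n + 1 - d - 2 = n - d - 1 by omega, update_idem,
    update_eq_self_iff]
  exact (hT.1 (n - d - 1, 0) (by simp only [isCell_assocShape_iff]; omega)).symm

theorem addBottom_pred_removeBottom (hnd : d + 4 ≤ n) (hmax : T (n - d - 2, 0) = n + d - 1) :
    addBottom (n - 1) d (removeBottom n d T) = T := by
  rw [addBottom, removeBottom, show n - 1 - d - 1 = n - d - 2 by omega, update_idem,
    show n - 1 + d = n + d - 1 by omega, ← hmax, update_eq_self]

def removalDepth (n d : ℕ) (T : ℕ × ℕ → ℕ) : ℕ := min (n + d - 1 - T (1, d)) (n - T (1, 2))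

theorem IsSYT.bottom_eq_of_removalDepth_pos (hT : IsSYT (assocShape n d) T) (hnd : d + 3 ≤ n)
    (h : 0 < removalDepth n d T) : d + 4 ≤ n ∧ T (n - d - 2, 0) = n + d - 1 :=
  hT.bottom_eq_of_second_row_lt hnd (by unfold removalDepth at h; omega)

theorem removalDepth_addBottom (hT : IsSYT (assocShape n d) T) (hnd : d + 3 ≤ n)
    (h : T (1, 2) ≤ n) : removalDepth (n + 1) d (addBottom n d T) = removalDepth n d T + 1 := by
  have hlast : T (1, d) ≤ n + d - 1 := sum_assocShape hnd ▸ hT.le_sum _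
  simp only [removalDepth, addBottom_second_row hnd]
  omega

theorem removalDepth_removeBottom (hnd : d + 4 ≤ n) (hpos : 0 < removalDepth n d T) :
    removalDepth (n - 1) d (removeBottom n d T) + 1 = removalDepth n d T := by
  simp only [removalDepth, removeBottom_second_row hnd] at hpos ⊢
  omega

end AssocTableaux

def toggle : ℕ × ℕ × (ℕ × ℕ → ℕ) → ℕ × ℕ × (ℕ × ℕ → ℕ)
  | (n, d, T) =>
    if d ≤ 1 ∨ n < T (1, 2) then (n, d, T)
    else if Even (removalDepth n d T) then (n + 1, d, addBottom n d T)
    else (n - 1, d, removeBottom n d T)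

def IsAssocTableau (x : ℕ × ℕ × (ℕ × ℕ → ℕ)) : Prop :=
  4 ≤ x.1 ∧ 1 ≤ x.2.1 ∧ x.2.1 ≤ x.1 - 3 ∧ IsSYT (assocShape x.1 x.2.1) x.2.2

theorem toggle_toggle {x : ℕ × ℕ × (ℕ × ℕ → ℕ)} (hx : IsAssocTableau x) :
    toggle (toggle x) = x := by
  obtain ⟨n, d, T⟩ := x
  obtain ⟨h4, -, hdn, hT⟩ : 4 ≤ n ∧ 1 ≤ d ∧ d ≤ n - 3 ∧ IsSYT (assocShape n d) T := hx
  have hnd : d + 3 ≤ n := by omega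
  by_cases hfix : d ≤ 1 ∨ n < T (1, 2)
  · simp only [toggle, if_pos hfix]
  rcases Nat.even_or_odd (removalDepth n d T) with heven | hodd
  · have hfix' : ¬(d ≤ 1 ∨ n + 1 < addBottom n d T (1, 2)) := by
      rw [addBottom_second_row hnd]; omega
    have hodd' : ¬Even (removalDepth (n + 1) d (addBottom n d T)) := by
      rw [removalDepth_addBottom hT hnd (by omega), Nat.even_add_one, not_not]
      exact heven
    simp only [toggle, if_neg hfix, if_pos heven, if_neg hfix', if_neg hodd',
      Nat.add_sub_cancel, removeBottom_succ_addBottom hT hnd]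
  · have hpos := hodd.pos
    obtain ⟨hnd', hmax⟩ := hT.bottom_eq_of_removalDepth_pos hnd hpos
    have hfix' : ¬(d ≤ 1 ∨ n - 1 < removeBottom n d T (1, 2)) := by
      rw [removeBottom_second_row hnd']; unfold removalDepth at hpos; omega
    have heven' : Even (removalDepth (n - 1) d (removeBottom n d T)) := by
      have := removalDepth_removeBottom hnd' hpos
      rw [Nat.odd_iff] at hodd
      rw [Nat.even_iff]
      omega
    simp only [toggle, if_neg hfix, if_neg (Nat.not_even_iff_odd.2 hodd), if_neg hfix',
      if_pos heven', Nat.sub_add_cancel (show 1 ≤ n by omega),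
      addBottom_pred_removeBottom hnd' hmax]

theorem isAssocTableau_toggle {x : ℕ × ℕ × (ℕ × ℕ → ℕ)} (hx : IsAssocTableau x) :
    IsAssocTableau (toggle x) := by
  obtain ⟨n, d, T⟩ := x
  obtain ⟨h4, hd, hdn, hT⟩ : 4 ≤ n ∧ 1 ≤ d ∧ d ≤ n - 3 ∧ IsSYT (assocShape n d) T := hx
  have hnd : d + 3 ≤ n := by omega
  simp only [toggle]
  split_ifs with hfix heven
  · exact ⟨h4, hd, hdn, hT⟩
  · dsimp only [IsAssocTableau]
    exact ⟨by omega, hd, by omega, isSYT_addBottom hT hnd⟩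
  · have hpos := (Nat.not_even_iff_odd.1 heven).pos
    obtain ⟨hnd', hmax⟩ := hT.bottom_eq_of_removalDepth_pos hnd hpos
    dsimp only [IsAssocTableau]
    exact ⟨by omega, hd, by omega, isSYT_removeBottom hT hnd' hmax⟩

theorem toggle_eq_self_iff {x : ℕ × ℕ × (ℕ × ℕ → ℕ)} (hx : IsAssocTableau x) :
    toggle x = x ↔ x.2.1 ≤ 1 ∨ x.1 < x.2.2 (1, 2) := by
  obtain ⟨n, d, T⟩ := x
  have h4 : 4 ≤ n := hx.1
  simp only [toggle]
  split_ifs with hfix <;> simp [hfix, show n - 1 ≠ n by omega]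

theorem toggle_fst_of_ne {x : ℕ × ℕ × (ℕ × ℕ → ℕ)} (hx : IsAssocTableau x) (h : toggle x ≠ x) :
    (toggle x).1 = x.1 + 1 ∨ (toggle x).1 + 1 = x.1 := by
  obtain ⟨n, d, T⟩ := x
  have h4 : 4 ≤ n := hx.1
  simp only [toggle] at h ⊢
  split_ifs at h ⊢
  · exact absurd rfl h
  · exact Or.inl rfl
  · exact Or.inr (Nat.sub_add_cancel (by omega))

theorem toggle_snd_fst (x : ℕ × ℕ × (ℕ × ℕ → ℕ)) : (toggle x).2.1 = x.2.1 := by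
  obtain ⟨n, d, T⟩ := x
  simp only [toggle]
  split_ifs <;> rfl

namespace AssocTableau

def involution (x : AssocTableau) : AssocTableau := ⟨toggle x.1, isAssocTableau_toggle x.2⟩

theorem involution_involution (x : AssocTableau) : x.involution.involution = x :=
  Subtype.ext (toggle_toggle x.2)

theorem restrictsToSyzygy_iff (x : AssocTableau) :
    RestrictsToSyzygy x ↔ x.1.2.1 ≤ 1 ∨ x.1.1 < x.1.2.2 (1, 2) :=
  x.2.2.2.2.forall_mem_second_row_iff (by have := x.2; omega)

theorem involution_eq_self_iff (x : AssocTableau) : x.involution = x ↔ RestrictsToSyzygy x :=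
  Subtype.ext_iff.trans ((toggle_eq_self_iff x.2).trans (restrictsToSyzygy_iff x).symm)

theorem boxes_involution (x : AssocTableau) (h : x.involution ≠ x) :
    boxes x.involution = boxes x + 1 ∨ boxes x = boxes x.involution + 1 := by
  have hfst := toggle_fst_of_ne x.2 fun h' => h (Subtype.ext h')
  have hsnd := toggle_snd_fst x.1
  have h4 := (isAssocTableau_toggle x.2).1
  simp only [boxes, involution]
  omega

end AssocTableau

/-- There is an involution on the set of all associahedron tableaux whose fixed points
are exactly the tableaux restricting to syzygy tableaux, and which changes the number
of boxes of any non-fixed tableau by exactly `1`. -/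
theorem assoc_tableau_involution :
    ∃ f : AssocTableau → AssocTableau,
      (∀ x, f (f x) = x) ∧
      (∀ x, f x = x ↔ RestrictsToSyzygy x) ∧
      (∀ x, f x ≠ x → boxes (f x) = boxes x + 1 ∨ boxes x = boxes (f x) + 1) :=
  ⟨AssocTableau.involution, AssocTableau.involution_involution,
    AssocTableau.involution_eq_self_iff, AssocTableau.boxes_involution⟩
end
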